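/- Let φ = (1+√5)/2 and S' = (1/√(2+φ))·[[1, e^{-4πi/5}·φ],[e^{4πi/5}·φ, -1]]. Then S' is unitary, (S')² = I, but no unit scalar multiple of S' normalizes the Pauli group P₁ = ⟨X,Y,Z⟩ ⊆ U(2); i.e. S' is not a Clifford operator even up to global phase. -/

import Mathlib

/-!
Every element of the Pauli group is diagonal or anti-diagonal, since these matrices form a
subgroup of `U(2)` containing `X`, `Y`, `Z`. The matrix `S'` is the traceless Hermitian matrix
`!![a, conj z; z, -a]` with `a = 1/√(2+φ)`, `z = a φ e^{4πi/5}` and `a² + |z|² = 1`, hence a unitary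
involution. Conjugating `X` by it gives a matrix whose `(0,0)` entry `2 a Re z` and `(0,1)` entry
`conj z ^ 2 - a²` are both nonzero (as `cos (4π/5) ≠ 0` and `φ ≠ 1`), and a global phase does not
change this conjugate, so no phase multiple of `S'` maps `X` into the Pauli group.
-/

open Matrix

abbrev Mat2 := Matrix (Fin 2) (Fin 2) ℂ

def Xm : Mat2 := !![0, 1; 1, 0]
def Ym : Mat2 := !![0, -Complex.I; Complex.I, 0]
def Zm : Mat2 := !![1, 0; 0, -1]

lemma Xm_mem : Xm ∈ Matrix.unitaryGroup (Fin 2) ℂ := by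
  rw [Matrix.mem_unitaryGroup_iff]
  ext i j
  fin_cases i <;> fin_cases j <;>
    simp [Xm, Matrix.mul_apply, Fin.sum_univ_two, Matrix.star_apply, Matrix.one_apply]

lemma Ym_mem : Ym ∈ Matrix.unitaryGroup (Fin 2) ℂ := by
  rw [Matrix.mem_unitaryGroup_iff]
  ext i j
  fin_cases i <;> fin_cases j <;>
    simp [Ym, Matrix.mul_apply, Fin.sum_univ_two, Matrix.star_apply, Matrix.one_apply,
      Complex.ext_iff]

lemma Zm_mem : Zm ∈ Matrix.unitaryGroup (Fin 2) ℂ := by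
  rw [Matrix.mem_unitaryGroup_iff]
  ext i j
  fin_cases i <;> fin_cases j <;>
    simp [Zm, Matrix.mul_apply, Fin.sum_univ_two, Matrix.star_apply, Matrix.one_apply]

def Xu : Matrix.unitaryGroup (Fin 2) ℂ := ⟨Xm, Xm_mem⟩
def Yu : Matrix.unitaryGroup (Fin 2) ℂ := ⟨Ym, Ym_mem⟩
def Zu : Matrix.unitaryGroup (Fin 2) ℂ := ⟨Zm, Zm_mem⟩

/-- The one-qubit Pauli group `P₁ = ⟨X, Y, Z⟩ ⊆ U(2)`. -/
def PauliGroup : Subgroup (Matrix.unitaryGroup (Fin 2) ℂ) := Subgroup.closure {Xu, Yu, Zu}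

/-- The normalizer of the Pauli group in `U(2)`. -/
def PauliNormalizer : Subgroup (Matrix.unitaryGroup (Fin 2) ℂ) := Subgroup.normalizer (PauliGroup : Set (Matrix.unitaryGroup (Fin 2) ℂ))

/-- The subgroup of unit scalar multiples of the identity in `U(2)`. -/
def ScalarU : Subgroup (Matrix.unitaryGroup (Fin 2) ℂ) where
  carrier := {U | ∃ c : ℂ, (U : Mat2) = c • (1 : Mat2)}
  one_mem' := ⟨1, by simp⟩
  mul_mem' := by
    rintro a b ⟨c, hc⟩ ⟨d, hd⟩
    exact ⟨c * d, by
      have : ((a * b : Matrix.unitaryGroup (Fin 2) ℂ) : Mat2) = (a : Mat2) * b := rfl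
      rw [this, hc, hd, smul_mul_smul_comm, one_mul]⟩
  inv_mem' := by
    rintro a ⟨c, hc⟩
    refine ⟨(starRingEnd ℂ) c, ?_⟩
    have : ((a⁻¹ : Matrix.unitaryGroup (Fin 2) ℂ) : Mat2) = star (a : Mat2) := rfl
    rw [this, hc]
    simp [star_smul]

lemma ScalarU_conj_mem (u v : Matrix.unitaryGroup (Fin 2) ℂ) (hv : v ∈ ScalarU) :
    u * v * u⁻¹ ∈ ScalarU := by
  obtain ⟨c, hc⟩ := hv
  refine ⟨c, ?_⟩
  have h1 : ((u * v * u⁻¹ : Matrix.unitaryGroup (Fin 2) ℂ) : Mat2)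
      = (u : Mat2) * (v : Mat2) * ((u⁻¹ : Matrix.unitaryGroup (Fin 2) ℂ) : Mat2) := rfl
  have h2 : (u : Mat2) * ((u⁻¹ : Matrix.unitaryGroup (Fin 2) ℂ) : Mat2) = 1 :=
    congrArg (fun w : Matrix.unitaryGroup (Fin 2) ℂ => (w : Mat2)) (mul_inv_cancel u)
  rw [h1, hc, mul_smul_comm, mul_one, smul_mul_assoc, h2]

instance : (ScalarU.subgroupOf PauliNormalizer).Normal := by
  constructor
  intro n hmem g
  rw [Subgroup.mem_subgroupOf] at hmem ⊢
  exact ScalarU_conj_mem (g : Matrix.unitaryGroup (Fin 2) ℂ) n hmem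

/-- The one-qubit Clifford group: the normalizer of the Pauli group modulo global phases. -/
def Cliff1 := PauliNormalizer ⧸ (ScalarU.subgroupOf PauliNormalizer)

noncomputable instance : Group Cliff1 := QuotientGroup.Quotient.group _

/-- The Pauli group `P₁` as a set of matrices. -/
def PauliSet : Set Mat2 :=
  (fun U : Matrix.unitaryGroup (Fin 2) ℂ => (U : Mat2)) '' (PauliGroup : Set _)

/-- A matrix is a Clifford operator if it is unitary and conjugation by it maps the
Pauli group `P₁` onto itself. -/
def IsCliffordMat (M : Mat2) : Prop :=
  M ∈ Matrix.unitaryGroup (Fin 2) ℂ ∧ (fun p => M * p * star M) '' PauliSet = PauliSet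

noncomputable def goldenRatio' : ℝ := (1 + Real.sqrt 5) / 2

/-- The Fibonacci S-matrix conjugated into the basis where T is scalar. -/
noncomputable def FibS' : Mat2 :=
  (1 / (Real.sqrt (2 + goldenRatio') : ℂ)) •
    !![1, Complex.exp (-(4 * Real.pi * Complex.I) / 5) * (goldenRatio' : ℂ);
       Complex.exp (4 * Real.pi * Complex.I / 5) * (goldenRatio' : ℂ), -1]

open ComplexConjugate

def IsMonomial {R : Type*} [Zero R] (A : Matrix (Fin 2) (Fin 2) R) : Prop :=
  (A 0 1 = 0 ∧ A 1 0 = 0) ∨ (A 0 0 = 0 ∧ A 1 1 = 0)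

section Monomial

variable {R : Type*}

theorem IsMonomial.mul [NonUnitalNonAssocSemiring R] {A B : Matrix (Fin 2) (Fin 2) R}
    (hA : IsMonomial A) (hB : IsMonomial B) : IsMonomial (A * B) := by
  unfold IsMonomial at *
  simp only [Matrix.mul_apply, Fin.sum_univ_two]
  rcases hA with ⟨ha₁, ha₂⟩ | ⟨ha₁, ha₂⟩ <;> rcases hB with ⟨hb₁, hb₂⟩ | ⟨hb₁, hb₂⟩ <;>
    simp [ha₁, ha₂, hb₁, hb₂]

theorem IsMonomial.star [AddMonoid R] [StarAddMonoid R] {A : Matrix (Fin 2) (Fin 2) R}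
    (hA : IsMonomial A) : IsMonomial (star A) := by
  unfold IsMonomial at *
  simp only [Matrix.star_apply]
  rcases hA with ⟨h₁, h₂⟩ | ⟨h₁, h₂⟩ <;> simp [h₁, h₂]

def monomialSubgroup (R : Type*) [CommRing R] [StarRing R] :
    Subgroup (Matrix.unitaryGroup (Fin 2) R) where
  carrier := {U | IsMonomial (U : Matrix (Fin 2) (Fin 2) R)}
  one_mem' := Or.inl (by simp)
  mul_mem' := IsMonomial.mul
  inv_mem' := IsMonomial.star

end Monomial

theorem pauliGroup_le_monomialSubgroup : PauliGroup ≤ monomialSubgroup ℂ := by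
  rw [PauliGroup, Subgroup.closure_le]
  rintro U (rfl | rfl | rfl) <;> simp [monomialSubgroup, IsMonomial, Xu, Yu, Zu, Xm, Ym, Zm]

theorem isMonomial_of_mem_pauliSet {P : Mat2} (hP : P ∈ PauliSet) : IsMonomial P := by
  obtain ⟨U, hU, rfl⟩ := hP
  exact pauliGroup_le_monomialSubgroup hU

theorem Xm_mem_pauliSet : Xm ∈ PauliSet :=
  ⟨Xu, Subgroup.subset_closure (Set.mem_insert _ _), rfl⟩

theorem IsCliffordMat.conj_mem_pauliSet {M P : Mat2} (hM : IsCliffordMat M)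
    (hP : P ∈ PauliSet) : M * P * star M ∈ PauliSet :=
  hM.2 ▸ Set.mem_image_of_mem _ hP

theorem smul_mul_mul_star_smul {μ : ℂ} (hμ : ‖μ‖ = 1) (M P : Mat2) :
    (μ • M) * P * star (μ • M) = M * P * star M := by
  have hμμ : μ * conj μ = 1 := by
    rw [Complex.mul_conj, Complex.normSq_eq_norm_sq, hμ]; norm_num
  rw [star_smul, smul_mul_assoc, smul_mul_assoc, mul_smul_comm, smul_smul, Complex.star_def,
    hμμ, one_smul]

theorem not_isCliffordMat_smul {M : Mat2} (hM : ¬ IsMonomial (M * Xm * star M)) {μ : ℂ}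
    (hμ : ‖μ‖ = 1) : ¬ IsCliffordMat (μ • M) := fun hC =>
  hM <| isMonomial_of_mem_pauliSet <|
    smul_mul_mul_star_smul hμ M Xm ▸ hC.conj_mem_pauliSet Xm_mem_pauliSet

def reflectionMat (a : ℝ) (z : ℂ) : Mat2 := !![(a : ℂ), conj z; z, -a]

section Reflection

variable (a : ℝ) (z : ℂ)

theorem star_reflectionMat : star (reflectionMat a z) = reflectionMat a z := by
  ext i j
  fin_cases i <;> fin_cases j <;> simp [reflectionMat, Matrix.star_apply]

theorem reflectionMat_mul_self :
    reflectionMat a z * reflectionMat a z = ((a ^ 2 + Complex.normSq z : ℝ) : ℂ) • 1 := by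
  ext i j
  fin_cases i <;> fin_cases j <;>
    simp [reflectionMat, Matrix.mul_apply, Fin.sum_univ_two, Complex.normSq_eq_conj_mul_self] <;>
    ring

theorem reflectionMat_mul_Xm_mul_apply_zero_zero :
    (reflectionMat a z * Xm * reflectionMat a z) 0 0 = 2 * a * z.re := by
  simp [reflectionMat, Xm, Matrix.mul_apply, Fin.sum_univ_two, Complex.ext_iff]
  ring_nf; simp

theorem reflectionMat_mul_Xm_mul_apply_zero_one :
    (reflectionMat a z * Xm * reflectionMat a z) 0 1 = conj z ^ 2 - a ^ 2 := by
  simp [reflectionMat, Xm, Matrix.mul_apply, Fin.sum_univ_two]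
  ring

end Reflection

theorem not_isMonomial_reflectionMat_mul_Xm_mul {a : ℝ} {z : ℂ} (ha : a ≠ 0) (hre : z.re ≠ 0)
    (hnormSq : Complex.normSq z ≠ a ^ 2) :
    ¬ IsMonomial (reflectionMat a z * Xm * reflectionMat a z) := by
  have h₀₀ : (reflectionMat a z * Xm * reflectionMat a z) 0 0 ≠ 0 := by
    rw [reflectionMat_mul_Xm_mul_apply_zero_zero]
    exact_mod_cast mul_ne_zero (mul_ne_zero two_ne_zero ha) hre
  have h₀₁ : (reflectionMat a z * Xm * reflectionMat a z) 0 1 ≠ 0 := by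
    rw [reflectionMat_mul_Xm_mul_apply_zero_one, sub_ne_zero]
    intro h
    apply hnormSq
    simpa [Complex.normSq_eq_norm_sq, sq_abs] using congrArg norm h
  rintro (⟨h, -⟩ | ⟨h, -⟩)
  exacts [h₀₁ h, h₀₀ h]

section FibS'

open Real

noncomputable def fibS'Diag : ℝ := (√(2 + goldenRatio'))⁻¹

noncomputable def fibS'OffDiag : ℂ :=
  fibS'Diag * goldenRatio' * Complex.exp (↑(4 * π / 5) * Complex.I)

theorem fibS'_eq_reflectionMat : FibS' = reflectionMat fibS'Diag fibS'OffDiag := by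
  have hexp : Complex.exp (4 * π * Complex.I / 5) = Complex.exp (↑(4 * π / 5) * Complex.I) := by
    push_cast; ring_nf
  have hconj : conj (Complex.exp (↑(4 * π / 5) * Complex.I)) =
      Complex.exp (-(4 * π * Complex.I) / 5) := by
    rw [← Complex.exp_conj, map_mul, Complex.conj_ofReal, Complex.conj_I]
    push_cast; ring_nf
  ext i j
  fin_cases i <;> fin_cases j <;>
    simp only [FibS', reflectionMat, fibS'OffDiag, fibS'Diag, map_mul, Complex.conj_ofReal, hconj,
      hexp] <;> simp <;> ring

theorem fibS'Diag_pos : 0 < fibS'Diag := by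
  have := goldenRatio_pos
  unfold fibS'Diag goldenRatio'
  positivity

theorem normSq_fibS'OffDiag : Complex.normSq fibS'OffDiag = fibS'Diag ^ 2 * goldenRatio' ^ 2 := by
  rw [fibS'OffDiag, map_mul, map_mul, Complex.normSq_ofReal, Complex.normSq_ofReal,
    Complex.normSq_eq_norm_sq (Complex.exp _), Complex.norm_exp_ofReal_mul_I]
  ring

theorem fibS'OffDiag_re_neg : fibS'OffDiag.re < 0 := by
  have hcos : cos (4 * π / 5) < 0 := by
    apply cos_neg_of_pi_div_two_lt_of_lt <;> linarith [pi_pos]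
  have : fibS'OffDiag.re = fibS'Diag * goldenRatio' * cos (4 * π / 5) := by
    rw [fibS'OffDiag, ← Complex.ofReal_mul, Complex.re_ofReal_mul, Complex.exp_ofReal_mul_I_re]
  rw [this]
  exact mul_neg_of_pos_of_neg (mul_pos fibS'Diag_pos goldenRatio_pos) hcos

theorem fibS'Diag_sq_add_normSq_fibS'OffDiag :
    fibS'Diag ^ 2 + Complex.normSq fibS'OffDiag = 1 := by
  have hφ : goldenRatio' = goldenRatio := rfl
  rw [normSq_fibS'OffDiag, hφ, goldenRatio_sq, fibS'Diag, hφ, inv_pow,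
    sq_sqrt (by linarith [goldenRatio_pos])]
  field_simp
  ring

theorem normSq_fibS'OffDiag_ne : Complex.normSq fibS'OffDiag ≠ fibS'Diag ^ 2 := by
  rw [normSq_fibS'OffDiag, Ne, mul_eq_left₀ (pow_ne_zero 2 fibS'Diag_pos.ne')]
  have : 1 < goldenRatio' := one_lt_goldenRatio
  nlinarith

end FibS'

theorem star_fibS' : star FibS' = FibS' := by
  rw [fibS'_eq_reflectionMat, star_reflectionMat]

theorem fibS'_mul_self : FibS' * FibS' = 1 := by
  rw [fibS'_eq_reflectionMat, reflectionMat_mul_self, fibS'Diag_sq_add_normSq_fibS'OffDiag]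
  simp

theorem not_isMonomial_fibS'_mul_Xm_mul_star : ¬ IsMonomial (FibS' * Xm * star FibS') := by
  rw [star_fibS', fibS'_eq_reflectionMat]
  exact not_isMonomial_reflectionMat_mul_Xm_mul fibS'Diag_pos.ne' fibS'OffDiag_re_neg.ne
    normSq_fibS'OffDiag_ne

/-- The matrix `S' = (1/√(2+φ))·[[1, e^{-4πi/5}φ],[e^{4πi/5}φ, -1]]` is
unitary and squares to the identity, but no unit scalar multiple of it normalizes the
Pauli group `P₁ = ⟨X,Y,Z⟩ ⊆ U(2)`; i.e. `S'` is not a Clifford operator even up to a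
global phase. -/
theorem conjugated_fibonacci_S_not_clifford :
    FibS' ∈ Matrix.unitaryGroup (Fin 2) ℂ ∧ FibS' ^ 2 = 1 ∧
    ¬ ∃ mu : ℂ, ‖mu‖ = 1 ∧ IsCliffordMat (mu • FibS') := by
  refine ⟨mem_unitaryGroup_iff'.2 (by rw [star_fibS', fibS'_mul_self]),
    (sq _).trans fibS'_mul_self, ?_⟩
  rintro ⟨μ, hμ, hC⟩
  exact not_isCliffordMat_smul not_isMonomial_fibS'_mul_Xm_mul_star hμ hC
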